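/- arXiv:1501.05708 — 6 statements merged into one kernel-verified Lean document; each statement's English description precedes it below -/
import Mathlib

section
/- Let (ū₁,ū₂,ū₃) be the positive equilibrium of the kinetic system. Along any solution (u₁,u₂,u₃) with positive coordinates, the derivative of V(u(t)) = d(u₁-ū₁-ū₁ln(u₁/ū₁)) + e(u₂-ū₂-ū₂ln(u₂/ū₂)) + (u₃-ū₃-ū₃ln(u₃/ū₃)) equals -ad(u₁-ū₁)² - be(u₂-ū₂)² - c(u₃-ū₃)², which is strictly negative whenever (u₁,u₂,u₃) ≠ (ū₁,ū₂,ū₃). -/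
/-! Writing each equation as `uᵢ' = uᵢ gᵢ(u)`, the Volterra term `x - m - m log (x / m)` has
derivative `(uᵢ - ūᵢ) gᵢ(u)`. The equilibrium equations turn the per-capita rates into
`g₁ = -a(u₁ - ū₁) - (u₃ - ū₃)`, `g₂ = -b(u₂ - ū₂) - (u₃ - ū₃)`,
`g₃ = -c(u₃ - ū₃) + d(u₁ - ū₁) + e(u₂ - ū₂)`, and with the weights `d, e, 1` the predator–prey
cross terms cancel, leaving a negative definite quadratic form. -/

theorem HasDerivAt.volterra {f : ℝ → ℝ} {g m t : ℝ} (hf : HasDerivAt f (f t * g) t)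
    (hft : f t ≠ 0) (hm : m ≠ 0) :
    HasDerivAt (fun s => f s - m - m * Real.log (f s / m)) ((f t - m) * g) t := by
  have hlog := ((hf.div_const m).log (div_ne_zero hft hm)).const_mul m
  refine ((hf.sub_const m).sub hlog).congr_deriv ?_
  field_simp

theorem neg_weighted_sum_sq_sub_neg {p q r x y z x₀ y₀ z₀ : ℝ} (hp : 0 < p) (hq : 0 < q)
    (hr : 0 < r) (h : (x, y, z) ≠ (x₀, y₀, z₀)) :
    -(p * (x - x₀) ^ 2) - q * (y - y₀) ^ 2 - r * (z - z₀) ^ 2 < 0 := by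
  have hx : 0 ≤ p * (x - x₀) ^ 2 := by positivity
  have hy : 0 ≤ q * (y - y₀) ^ 2 := by positivity
  have hz : 0 ≤ r * (z - z₀) ^ 2 := by positivity
  have hne : x - x₀ ≠ 0 ∨ y - y₀ ≠ 0 ∨ z - z₀ ≠ 0 := by
    contrapose! h
    simp only [sub_eq_zero] at h
    rw [h.1, h.2.1, h.2.2]
  rcases hne with hne | hne | hne
  · linarith [mul_pos hp (sq_pos_of_ne_zero hne)]
  · linarith [mul_pos hq (sq_pos_of_ne_zero hne)]
  · linarith [mul_pos hr (sq_pos_of_ne_zero hne)]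

theorem stmt5 (a b c d e : ℝ) (ha : 0 < a) (hb : 0 < b) (hc : 0 < c)
    (hd : 0 < d) (he : 0 < e)
    (b1 b2 b3 : ℝ) (hb1 : 0 < b1) (hb2 : 0 < b2) (hb3 : 0 < b3)
    (heq1 : a * (1 - b1) = b3) (heq2 : b * (1 - b2) = b3)
    (heq3 : c * b3 = d * b1 + e * b2)
    (u1 u2 u3 : ℝ → ℝ) (t : ℝ)
    (hpos : ∀ s : ℝ, 0 < u1 s ∧ 0 < u2 s ∧ 0 < u3 s)
    (hu1 : HasDerivAt u1 (a * u1 t * (1 - u1 t) - u1 t * u3 t) t)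
    (hu2 : HasDerivAt u2 (b * u2 t * (1 - u2 t) - u2 t * u3 t) t)
    (hu3 : HasDerivAt u3 (-(c * (u3 t) ^ 2) + (d * u1 t + e * u2 t) * u3 t) t) :
    HasDerivAt (fun s =>
        d * (u1 s - b1 - b1 * Real.log (u1 s / b1)) +
        e * (u2 s - b2 - b2 * Real.log (u2 s / b2)) +
        (u3 s - b3 - b3 * Real.log (u3 s / b3)))
      (-(a * d * (u1 t - b1) ^ 2) - b * e * (u2 t - b2) ^ 2
        - c * (u3 t - b3) ^ 2) t ∧
    ((u1 t, u2 t, u3 t) ≠ (b1, b2, b3) →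
      -(a * d * (u1 t - b1) ^ 2) - b * e * (u2 t - b2) ^ 2
        - c * (u3 t - b3) ^ 2 < 0) := by
  obtain ⟨h1, h2, h3⟩ := hpos t
  have hV1 := HasDerivAt.volterra (g := a * (1 - u1 t) - u3 t)
    (hu1.congr_deriv (by ring)) h1.ne' hb1.ne'
  have hV2 := HasDerivAt.volterra (g := b * (1 - u2 t) - u3 t)
    (hu2.congr_deriv (by ring)) h2.ne' hb2.ne'
  have hV3 := HasDerivAt.volterra (g := -(c * u3 t) + (d * u1 t + e * u2 t))
    (hu3.congr_deriv (by ring)) h3.ne' hb3.ne'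
  refine ⟨?_, neg_weighted_sum_sq_sub_neg (by positivity) (by positivity) hc⟩
  refine (((hV1.const_mul d).add (hV2.const_mul e)).add hV3).congr_deriv ?_
  linear_combination d * (u1 t - b1) * heq1 + e * (u2 t - b2) * heq2 + (b3 - u3 t) * heq3
end

section
/- The Jacobian matrix G = [[-aū₁, 0, -ū₁], [0, -bū₂, -ū₂], [dū₃, eū₃, -cū₃]] of the kinetic system at the positive equilibrium ū has all eigenvalues with strictly negative real part. -/
/-!
The Jacobian is a 3 × 3 arrowhead matrix, so its characteristic polynomial factors as
`(λ + aū₁)(λ + bū₂)(λ + cū₃) + eū₂ū₃ (λ + aū₁) + dū₁ū₃ (λ + bū₂)`: a monic cubic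
`λ³ + A₂λ² + A₁λ + A₀` with positive coefficients and `A₂A₁ - A₀ > 0`. The Routh–Hurwitz
criterion for cubics is proved directly: if a root `x + iy` had `x ≥ 0`, the imaginary part of
the equation forces either `y = 0`, impossible as all coefficients are positive, or
`y² = 3x² + 2A₂x + A₁`, and substituting into the real part gives
`8x³ + 8A₂x² + 2(A₁ + A₂²)x + (A₂A₁ - A₀) = 0`, again impossible.
-/

open Polynomial

theorem Complex.re_neg_of_cubic_eq_zero {p₂ p₁ p₀ : ℝ} (h₂ : 0 < p₂) (h₀ : 0 < p₀)
    (hHurwitz : p₀ < p₂ * p₁) {z : ℂ} (hz : z ^ 3 + p₂ * z ^ 2 + p₁ * z + p₀ = 0) :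
    z.re < 0 := by
  obtain ⟨x, y⟩ := z
  have h₁ : 0 < p₁ := pos_of_mul_pos_right (h₀.trans hHurwitz) h₂.le
  have hre : x ^ 3 - 3 * x * y ^ 2 + p₂ * (x ^ 2 - y ^ 2) + p₁ * x + p₀ = 0 := by
    have := congrArg Complex.re hz
    simp only [pow_succ, pow_zero, one_mul, add_re, mul_re, mul_im, ofReal_re, ofReal_im,
      zero_mul, sub_zero, zero_re] at this
    linear_combination this
  have him : y * (3 * x ^ 2 - y ^ 2 + 2 * p₂ * x + p₁) = 0 := by
    have := congrArg Complex.im hz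
    simp only [pow_succ, pow_zero, one_mul, add_im, mul_im, mul_re, ofReal_re, ofReal_im,
      zero_mul, add_zero, zero_im] at this
    linear_combination this
  show x < 0
  by_contra! hx
  rcases mul_eq_zero.mp him with rfl | hy
  · have : 0 < x ^ 3 + p₂ * x ^ 2 + p₁ * x + p₀ := by positivity
    linarith
  · have hx_cubic : 8 * x ^ 3 + 8 * p₂ * x ^ 2 + 2 * (p₁ + p₂ ^ 2) * x + (p₂ * p₁ - p₀) = 0 := by
      linear_combination -hre + (3 * x + p₂) * hy
    have : 0 < 8 * x ^ 3 + 8 * p₂ * x ^ 2 + 2 * (p₁ + p₂ ^ 2) * x + (p₂ * p₁ - p₀) := by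
      have := sub_pos.mpr hHurwitz
      positivity
    linarith

theorem Matrix.charpoly_arrowhead {R : Type*} [CommRing R] (p q r s t u w : R) :
    (!![-p, 0, -q; 0, -r, -s; t, u, -w] : Matrix (Fin 3) (Fin 3) R).charpoly =
      (X + C p) * (X + C r) * (X + C w) + C (s * u) * (X + C p) + C (q * t) * (X + C r) := by
  rw [Matrix.charpoly, Matrix.det_fin_three]
  simp only [Fin.isValue, charmatrix_apply_eq, of_apply, cons_val', cons_val_zero,
    cons_val_fin_one, map_neg, sub_neg_eq_add, cons_val_one, cons_val, ne_eq, Fin.reduceEq,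
    not_false_eq_true, charmatrix_apply_ne, neg_neg, mul_neg, zero_ne_one, map_zero, neg_zero,
    one_ne_zero, mul_zero, zero_mul, sub_zero, add_zero, map_mul]
  ring

theorem Complex.re_neg_of_isRoot_charpoly_arrowhead {p q r s t u w : ℝ} (hp : 0 < p)
    (hr : 0 < r) (hw : 0 < w) (hqt : 0 < q * t) (hsu : 0 < s * u) {z : ℂ}
    (hz : ((!![-p, 0, -q; 0, -r, -s; t, u, -w] : Matrix (Fin 3) (Fin 3) ℝ).map
      (Complex.ofReal ·)).charpoly.IsRoot z) :
    z.re < 0 := by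
  change (Matrix.map _ ofRealHom).charpoly.IsRoot z at hz
  rw [Matrix.charpoly_map, IsRoot, eval_map, Matrix.charpoly_arrowhead] at hz
  simp only [eval₂_add, eval₂_mul, eval₂_X, eval₂_C, ofRealHom_eq_coe] at hz
  refine re_neg_of_cubic_eq_zero (p₂ := p + r + w) (p₁ := p * r + p * w + r * w + q * t + s * u)
    (p₀ := p * r * w + s * u * p + q * t * r) (by positivity) (by positivity) ?_ ?_
  · rw [← sub_pos, show (p + r + w) * (p * r + p * w + r * w + q * t + s * u)
        - (p * r * w + s * u * p + q * t * r)
        = (p + r) * (r + w) * (w + p) + q * t * (p + w) + s * u * (r + w) by ring]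
    positivity
  · push_cast at hz ⊢
    linear_combination hz

theorem stmt8 (a b c d e b1 b2 b3 : ℝ) (ha : 0 < a) (hb : 0 < b) (hc : 0 < c)
    (hd : 0 < d) (he : 0 < e) (hb1 : 0 < b1) (hb2 : 0 < b2) (hb3 : 0 < b3) :
    let G : Matrix (Fin 3) (Fin 3) ℝ :=
      !![-(a * b1), 0, -b1; 0, -(b * b2), -b2; d * b3, e * b3, -(c * b3)]
    ∀ z : ℂ, (G.map (Complex.ofReal ·)).charpoly.IsRoot z → z.re < 0 := by
  intro G z hz
  exact Complex.re_neg_of_isRoot_charpoly_arrowhead (mul_pos ha hb1) (mul_pos hb hb2)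
    (mul_pos hc hb3) (mul_pos hb1 (mul_pos hd hb3)) (mul_pos hb2 (mul_pos he hb3)) hz
end

section
/- For the characteristic polynomial λ³ + A₂λ² + A₁λ + A₀ of -G where G = [[-aū₁, 0, -ū₁], [0, -bū₂, -ū₂], [dū₃, eū₃, -cū₃]], one has A₂ = aū₁+bū₂+cū₃ > 0, A₁ = abū₁ū₂ + acū₁ū₃ + dū₁ū₃ + bcū₂ū₃ + eū₂ū₃ > 0, A₀ = (abc+ae+bd)ū₁ū₂ū₃ > 0, and A₂A₁ - A₀ > 0. -/
/-! In `A₂A₁ - A₀` the three products `aū₁ · bcū₂ū₃`, `bū₂ · acū₁ū₃`, `cū₃ · abū₁ū₂` each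
contribute `abc ū₁ū₂ū₃`, while `aū₁ · eū₂ū₃` and `bū₂ · dū₁ū₃` cancel the `ae` and `bd` parts
of `A₀`; what remains is a sum of positive monomials. -/

lemma det_smul_one_sub_interaction_matrix (a b c d e u₁ u₂ u₃ x : ℝ) :
    Matrix.det (x • (1 : Matrix (Fin 3) (Fin 3) ℝ) -
        !![-(a * u₁), 0, -u₁; 0, -(b * u₂), -u₂; d * u₃, e * u₃, -(c * u₃)])
      = x ^ 3 + (a * u₁ + b * u₂ + c * u₃) * x ^ 2
        + (a * b * u₁ * u₂ + a * c * u₁ * u₃ + d * u₁ * u₃ + b * c * u₂ * u₃ + e * u₂ * u₃) * x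
        + (a * b * c + a * e + b * d) * (u₁ * u₂ * u₃) := by
  simp only [Matrix.det_fin_three, Fin.isValue, Matrix.sub_apply, Matrix.smul_apply,
    Matrix.one_apply_eq, Matrix.one_apply_ne, smul_eq_mul, mul_one, Matrix.of_apply,
    Matrix.cons_val', Matrix.cons_val_zero, Matrix.cons_val_one, Matrix.cons_val,
    Matrix.cons_val_fin_one, ne_eq, Fin.reduceEq, not_false_eq_true, zero_ne_one, one_ne_zero,
    mul_zero, zero_mul, sub_zero, sub_self]
  ring

lemma hurwitz_determinant_eq (a b c d e u₁ u₂ u₃ : ℝ) :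
    (a * u₁ + b * u₂ + c * u₃)
        * (a * b * u₁ * u₂ + a * c * u₁ * u₃ + d * u₁ * u₃ + b * c * u₂ * u₃ + e * u₂ * u₃)
      - (a * b * c + a * e + b * d) * (u₁ * u₂ * u₃)
      = a ^ 2 * b * u₁ ^ 2 * u₂ + a ^ 2 * c * u₁ ^ 2 * u₃ + a * d * u₁ ^ 2 * u₃
        + a * b ^ 2 * u₁ * u₂ ^ 2 + b ^ 2 * c * u₂ ^ 2 * u₃ + b * e * u₂ ^ 2 * u₃
        + a * c ^ 2 * u₁ * u₃ ^ 2 + c * d * u₁ * u₃ ^ 2 + b * c ^ 2 * u₂ * u₃ ^ 2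
        + c * e * u₂ * u₃ ^ 2 + 2 * (a * b * c * (u₁ * u₂ * u₃)) := by
  ring

theorem stmt9 (a b c d e b1 b2 b3 : ℝ) (ha : 0 < a) (hb : 0 < b) (hc : 0 < c)
    (hd : 0 < d) (he : 0 < e) (hb1 : 0 < b1) (hb2 : 0 < b2) (hb3 : 0 < b3) :
    let G : Matrix (Fin 3) (Fin 3) ℝ :=
      !![-(a * b1), 0, -b1; 0, -(b * b2), -b2; d * b3, e * b3, -(c * b3)]
    let A2 := a * b1 + b * b2 + c * b3
    let A1 := a * b * b1 * b2 + a * c * b1 * b3 + d * b1 * b3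
      + b * c * b2 * b3 + e * b2 * b3
    let A0 := (a * b * c + a * e + b * d) * (b1 * b2 * b3)
    (∀ x : ℝ, Matrix.det (x • (1 : Matrix (Fin 3) (Fin 3) ℝ) - G)
        = x ^ 3 + A2 * x ^ 2 + A1 * x + A0) ∧
    0 < A2 ∧ 0 < A1 ∧ 0 < A0 ∧ 0 < A2 * A1 - A0 := by
  intro G A2 A1 A0
  refine ⟨det_smul_one_sub_interaction_matrix a b c d e b1 b2 b3, by positivity, by positivity,
    by positivity, ?_⟩
  rw [hurwitz_determinant_eq]
  positivity
end

section
/- Let μ ≥ 0 and let M(μ) = -μK + G, where K = diag(k₁₁, k₂₂, k₃₃) with k₁₁, k₂₂, k₃₃ > 0 and G = [[-aū₁, 0, -ū₁], [0, -bū₂, -ū₂], [dū₃, eū₃, -cū₃]] with a,b,c,d,e,ū₁,ū₂,ū₃ > 0. Then every eigenvalue of M(μ) has strictly negative real part. -/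
/-!
With `α = μ k₁₁ + a ū₁`, `β = μ k₂₂ + b ū₂`, `γ = μ k₃₃ + c ū₃` all positive, `M(μ)` has the
sign pattern `!![-α, 0, -u₁; 0, -β, -u₂; v₁, v₂, -γ]` with `u₁ v₁, u₂ v₂ > 0`. Its characteristic
polynomial `λ³ + p λ² + q λ + r` has positive coefficients with `p q > r`, so the Routh–Hurwitz
criterion for cubics applies; for a cubic that criterion is checked directly by splitting a root
into real and imaginary parts.
-/

open Polynomial

theorem Complex.re_neg_of_cubic_eq_zero_s10 {p q r : ℝ} (hp : 0 < p) (hq : 0 < q) (hr : 0 < r)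
    (hpq : r < p * q) {z : ℂ} (hz : z ^ 3 + p * z ^ 2 + q * z + r = 0) : z.re < 0 := by
  obtain ⟨x, y⟩ := z
  have hz_re := congrArg Complex.re hz
  have hz_im := congrArg Complex.im hz
  simp only [pow_succ, pow_zero, one_mul, Complex.add_re, Complex.add_im, Complex.mul_re,
    Complex.mul_im, Complex.ofReal_re, Complex.ofReal_im, Complex.zero_re,
    Complex.zero_im] at hz_re hz_im
  have hre : x ^ 3 - 3 * x * y ^ 2 + p * (x ^ 2 - y ^ 2) + q * x + r = 0 := by
    linear_combination hz_re
  have him : y * (3 * x ^ 2 - y ^ 2 + 2 * p * x + q) = 0 := by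
    linear_combination hz_im
  show x < 0
  by_contra! hx
  rcases mul_eq_zero.mp him with hy | hy
  · subst hy
    nlinarith [pow_nonneg hx 3, sq_nonneg x]
  · -- eliminating `y ^ 2` leaves a polynomial in `x ≥ 0` whose constant term is `p * q - r > 0`
    have key : 8 * x ^ 3 + 8 * p * x ^ 2 + 2 * q * x + 2 * p ^ 2 * x + (p * q - r) = 0 := by
      linear_combination -hre + (3 * x + p) * hy
    nlinarith [pow_nonneg hx 3, mul_nonneg hp.le (sq_nonneg x), mul_nonneg hq.le hx,
      mul_nonneg (sq_nonneg p) hx]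

namespace Matrix

variable {R : Type*} [CommRing R]

def twoPreyOnePredator (α β γ u₁ u₂ v₁ v₂ : R) : Matrix (Fin 3) (Fin 3) R :=
  !![-α, 0, -u₁; 0, -β, -u₂; v₁, v₂, -γ]

theorem charpoly_twoPreyOnePredator (α β γ u₁ u₂ v₁ v₂ : R) :
    (twoPreyOnePredator α β γ u₁ u₂ v₁ v₂).charpoly =
      X ^ 3 + C (α + β + γ) * X ^ 2 + C (α * β + α * γ + β * γ + u₁ * v₁ + u₂ * v₂) * X
        + C (α * β * γ + α * u₂ * v₂ + β * u₁ * v₁) := by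
  rw [twoPreyOnePredator, charpoly, det_fin_three]
  simp [Fin.ext_iff]
  ring

theorem re_neg_of_isRoot_charpoly_twoPreyOnePredator {α β γ u₁ u₂ v₁ v₂ : ℝ}
    (hα : 0 < α) (hβ : 0 < β) (hγ : 0 < γ) (h₁ : 0 ≤ u₁ * v₁) (h₂ : 0 ≤ u₂ * v₂) {z : ℂ}
    (hz : ((twoPreyOnePredator α β γ u₁ u₂ v₁ v₂).map Complex.ofReal).charpoly.IsRoot z) :
    z.re < 0 := by
  rw [show Complex.ofReal = ⇑Complex.ofRealHom from rfl, charpoly_map,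
    charpoly_twoPreyOnePredator, IsRoot.def, eval_map] at hz
  simp only [eval₂_add, eval₂_mul, eval₂_pow, eval₂_X, eval₂_C, Complex.ofRealHom_eq_coe] at hz
  refine Complex.re_neg_of_cubic_eq_zero_s10 (by positivity)
    (by linarith [mul_pos hα hβ, mul_pos hα hγ, mul_pos hβ hγ])
    (by linarith [mul_pos (mul_pos hα hβ) hγ, mul_nonneg hα.le h₂, mul_nonneg hβ.le h₁]) ?_ hz
  -- `p * q - r = (α + β) (β + γ) (γ + α) + (α + γ) u₁ v₁ + (β + γ) u₂ v₂`
  linarith [mul_pos (mul_pos (add_pos hα hβ) (add_pos hβ hγ)) (add_pos hγ hα),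
    mul_nonneg (add_pos hα hγ).le h₁, mul_nonneg (add_pos hβ hγ).le h₂]

end Matrix

theorem stmt10 (a b c d e b1 b2 b3 k11 k22 k33 : ℝ)
    (ha : 0 < a) (hb : 0 < b) (hc : 0 < c) (hd : 0 < d) (he : 0 < e)
    (hb1 : 0 < b1) (hb2 : 0 < b2) (hb3 : 0 < b3)
    (hk11 : 0 < k11) (hk22 : 0 < k22) (hk33 : 0 < k33)
    (μ : ℝ) (hμ : 0 ≤ μ) :
    let K : Matrix (Fin 3) (Fin 3) ℝ := Matrix.diagonal ![k11, k22, k33]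
    let G : Matrix (Fin 3) (Fin 3) ℝ :=
      !![-(a * b1), 0, -b1; 0, -(b * b2), -b2; d * b3, e * b3, -(c * b3)]
    let M : Matrix (Fin 3) (Fin 3) ℝ := -(μ • K) + G
    ∀ z : ℂ, (M.map (Complex.ofReal ·)).charpoly.IsRoot z → z.re < 0 := by
  intro K G M z hz
  have hM : M = Matrix.twoPreyOnePredator (μ * k11 + a * b1) (μ * k22 + b * b2)
      (μ * k33 + c * b3) b1 b2 (d * b3) (e * b3) := by
    ext i j
    fin_cases i <;> fin_cases j <;> simp [M, K, G, Matrix.twoPreyOnePredator] <;> ring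
  rw [hM] at hz
  exact Matrix.re_neg_of_isRoot_charpoly_twoPreyOnePredator (by positivity) (by positivity)
    (by positivity) (by positivity) (by positivity) hz
end

section
/- With K = diag(k₁₁, k₂₂, k₃₃), k_ii > 0, and G as the Jacobian at the positive equilibrium, the coefficients of the characteristic polynomial det(λI + μK - G) = λ³ + A₂λ² + A₁λ + A₀ satisfy A₂ > 0, A₁ > 0, A₀ > 0 for every μ ≥ 0; explicitly A₀ = k₁₁k₂₂k₃₃μ³ + (k₁₁k₂₂cū₃ + k₁₁k₃₃bū₂ + k₂₂k₃₃aū₁)μ² + (abk₃₃ū₁ū₂ + dk₂₂ū₁ū₃ + ack₂₂ū₁ū₃ + bck₁₁ū₂ū₃ + ek₁₁ū₂ū₃)μ + (ae+bd+abc)ū₁ū₂ū₃. -/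
/-!
Writing `p = μ k₁₁ + a ū₁`, `q = μ k₂₂ + b ū₂`, `r = μ k₃₃ + c ū₃`, the matrix `μK - G` has the
arrowhead shape `[[p, 0, ū₁], [0, q, ū₂], [-dū₃, -eū₃, r]]`, whose shifted determinant is
`(λ + p)(λ + q)(λ + r) + (λ + p) e ū₂ū₃ + (λ + q) d ū₁ū₃`. For `μ ≥ 0` all of `p, q, r` are
positive and the off-diagonal products enter with a plus sign, so every coefficient is positive.
-/

namespace Matrix

theorem det_smul_one_add_arrowhead {R : Type*} [CommRing R] (x p q r s t u v : R) :
    det (x • (1 : Matrix (Fin 3) (Fin 3) R) + !![p, 0, s; 0, q, t; u, v, r])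
      = x ^ 3 + (p + q + r) * x ^ 2 + (p * q + p * r + q * r - t * v - s * u) * x
        + (p * q * r - p * (t * v) - q * (s * u)) := by
  simp [det_fin_three]
  ring

end Matrix

theorem smul_diagonal_sub_jacobian (a b c d e b1 b2 b3 k11 k22 k33 μ : ℝ) :
    μ • Matrix.diagonal ![k11, k22, k33]
        - !![-(a * b1), 0, -b1; 0, -(b * b2), -b2; d * b3, e * b3, -(c * b3)]
      = !![μ * k11 + a * b1, 0, b1; 0, μ * k22 + b * b2, b2;
          -(d * b3), -(e * b3), μ * k33 + c * b3] := by
  ext i j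
  fin_cases i <;> fin_cases j <;> simp

theorem stmt11 (a b c d e b1 b2 b3 k11 k22 k33 : ℝ)
    (ha : 0 < a) (hb : 0 < b) (hc : 0 < c) (hd : 0 < d) (he : 0 < e)
    (hb1 : 0 < b1) (hb2 : 0 < b2) (hb3 : 0 < b3)
    (hk11 : 0 < k11) (hk22 : 0 < k22) (hk33 : 0 < k33) :
    let K : Matrix (Fin 3) (Fin 3) ℝ := Matrix.diagonal ![k11, k22, k33]
    let G : Matrix (Fin 3) (Fin 3) ℝ :=
      !![-(a * b1), 0, -b1; 0, -(b * b2), -b2; d * b3, e * b3, -(c * b3)]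
    ∀ μ : ℝ, 0 ≤ μ → ∃ A2 A1 A0 : ℝ,
      (∀ x : ℝ, Matrix.det (x • (1 : Matrix (Fin 3) (Fin 3) ℝ) + μ • K - G)
          = x ^ 3 + A2 * x ^ 2 + A1 * x + A0) ∧
      0 < A2 ∧ 0 < A1 ∧ 0 < A0 ∧
      A0 = k11 * k22 * k33 * μ ^ 3
        + (k11 * k22 * (c * b3) + k11 * k33 * (b * b2) + k22 * k33 * (a * b1)) * μ ^ 2
        + (a * b * k33 * b1 * b2 + d * k22 * b1 * b3 + a * c * k22 * b1 * b3
            + b * c * k11 * b2 * b3 + e * k11 * b2 * b3) * μ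
        + (a * e + b * d + a * b * c) * (b1 * b2 * b3) := by
  intro K G μ hμ
  set p := μ * k11 + a * b1
  set q := μ * k22 + b * b2
  set r := μ * k33 + c * b3
  have hp : 0 < p := by positivity
  have hq : 0 < q := by positivity
  have hr : 0 < r := by positivity
  refine ⟨p + q + r, p * q + p * r + q * r + e * b2 * b3 + d * b1 * b3,
    p * q * r + p * (e * b2 * b3) + q * (d * b1 * b3),
    fun x => ?_, by positivity, by positivity, by positivity, by ring⟩
  rw [add_sub_assoc, smul_diagonal_sub_jacobian, Matrix.det_smul_one_add_arrowhead]
  ring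
end

section
/- Let M(μ) = -μK_u + G_u where K_u = [[k₁₁+k₁₃ū₃, 0, k₁₃ū₁],[0, k₂₂+k₂₃ū₃, k₂₃ū₂],[k₃₁ū₃, k₃₂ū₃, k₃₃+k₃₁ū₁+k₃₂ū₂]] and G_u = [[-aū₁,0,-ū₁],[0,-bū₂,-ū₂],[dū₃,eū₃,-cū₃]]. If k₃₁ = k₃₂ = 0 (but k₁₃, k₂₃ ≥ 0 arbitrary), then for every μ ≥ 0 all eigenvalues of M(μ) have strictly negative real part. -/
/-!
With `k₃₁ = k₃₂ = 0`, the matrix `-μ K_u + G_u` has the sign pattern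
`!![-p, 0, -q; 0, -r, -s; u, v, -w]` with `p, r, w > 0` and `q u, s v ≥ 0`. Its characteristic
polynomial is `X³ + A₂ X² + A₁ X + A₀` with `A₂ = p + r + w`, `A₁ = pr + pw + rw + qu + sv`,
`A₀ = prw + psv + qru`, and the Hurwitz margin
`A₂ A₁ - A₀ = (p + r)(p + w)(r + w) + qu (p + w) + sv (r + w)` is positive, so the Routh–Hurwitz
criterion for cubics applies.
-/

open Matrix Polynomial

theorem re_neg_of_cubic_eq_zero {A₂ A₁ A₀ : ℝ} (h₂ : 0 < A₂) (h₀ : 0 < A₀)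
    (hRH : A₀ < A₂ * A₁) {z : ℂ} (hz : z ^ 3 + A₂ * z ^ 2 + A₁ * z + A₀ = 0) : z.re < 0 := by
  have h₁ : 0 < A₁ := pos_of_mul_pos_right (h₀.trans hRH) h₂.le
  set x := z.re
  set y := z.im
  have hre : x ^ 3 - 3 * x * y ^ 2 + A₂ * (x ^ 2 - y ^ 2) + A₁ * x + A₀ = 0 := by
    have := congrArg Complex.re hz
    simp only [pow_succ, pow_zero, one_mul, Complex.add_re, Complex.mul_re, Complex.mul_im,
      Complex.ofReal_re, Complex.ofReal_im, zero_mul, sub_zero, Complex.zero_re] at this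
    linear_combination this
  have him : y * (3 * x ^ 2 - y ^ 2 + 2 * A₂ * x + A₁) = 0 := by
    have := congrArg Complex.im hz
    simp only [pow_succ, pow_zero, one_mul, Complex.add_im, Complex.mul_im, Complex.mul_re,
      Complex.ofReal_re, Complex.ofReal_im, zero_mul, add_zero, Complex.zero_im] at this
    linear_combination this
  by_contra! hx
  rcases mul_eq_zero.mp him with hy | hy
  · have : x ^ 3 + A₂ * x ^ 2 + A₁ * x + A₀ = 0 := by
      linear_combination hre + (3 * x + A₂) * y * hy
    nlinarith [pow_nonneg hx 3, mul_nonneg (mul_nonneg h₂.le hx) hx, mul_nonneg h₁.le hx]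
  -- off the real axis, `him` expresses `y²` in `x`; substituting it into `hre` leaves a cubic in
  -- `x` with positive coefficients
  · have : 8 * x ^ 3 + 8 * A₂ * x ^ 2 + 2 * (A₁ + A₂ ^ 2) * x + (A₂ * A₁ - A₀) = 0 := by
      linear_combination -hre + (3 * x + A₂) * hy
    nlinarith [pow_nonneg hx 3, mul_nonneg (mul_nonneg h₂.le hx) hx, mul_nonneg h₁.le hx,
      mul_nonneg (sq_nonneg A₂) hx]

theorem eval_charpoly_map_ofReal (p q r s u v w : ℝ) (z : ℂ) :
    ((!![-p, 0, -q; 0, -r, -s; u, v, -w] : Matrix (Fin 3) (Fin 3) ℝ).map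
      (Complex.ofReal ·)).charpoly.eval z
      = z ^ 3 + ↑(p + r + w) * z ^ 2 + ↑(p * r + p * w + r * w + q * u + s * v) * z
        + ↑(p * r * w + p * s * v + q * r * u) := by
  rw [eval_charpoly, det_fin_three]
  simp
  ring

theorem re_neg_of_isRoot_charpoly_map_ofReal {p q r s u v w : ℝ} (hp : 0 < p) (hr : 0 < r)
    (hw : 0 < w) (hqu : 0 ≤ q * u) (hsv : 0 ≤ s * v) {z : ℂ}
    (hz : ((!![-p, 0, -q; 0, -r, -s; u, v, -w] : Matrix (Fin 3) (Fin 3) ℝ).map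
      (Complex.ofReal ·)).charpoly.IsRoot z) : z.re < 0 := by
  rw [IsRoot, eval_charpoly_map_ofReal] at hz
  have hsvp : 0 ≤ p * s * v := by rw [mul_assoc]; positivity
  have hqrp : 0 ≤ q * r * u := by rw [mul_right_comm]; positivity
  refine re_neg_of_cubic_eq_zero (by positivity) (by positivity) ?_ hz
  have hurwitz : (p + r + w) * (p * r + p * w + r * w + q * u + s * v)
      - (p * r * w + p * s * v + q * r * u)
      = (p + r) * (p + w) * (r + w) + q * u * (p + w) + s * v * (r + w) := by ring
  linarith [mul_pos (mul_pos (add_pos hp hr) (add_pos hp hw)) (add_pos hr hw),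
    mul_nonneg hqu (add_pos hp hw).le, mul_nonneg hsv (add_pos hr hw).le]

theorem stmt19 (a b c d e b1 b2 b3 k11 k22 k33 k13 k23 k31 k32 : ℝ)
    (ha : 0 < a) (hb : 0 < b) (hc : 0 < c) (hd : 0 < d) (he : 0 < e)
    (hb1 : 0 < b1) (hb2 : 0 < b2) (hb3 : 0 < b3)
    (hk11 : 0 < k11) (hk22 : 0 < k22) (hk33 : 0 < k33)
    (hk13 : 0 ≤ k13) (hk23 : 0 ≤ k23)
    (hk31 : k31 = 0) (hk32 : k32 = 0) :
    let Ku : Matrix (Fin 3) (Fin 3) ℝ :=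
      !![k11 + k13 * b3, 0, k13 * b1;
         0, k22 + k23 * b3, k23 * b2;
         k31 * b3, k32 * b3, k33 + k31 * b1 + k32 * b2]
    let Gu : Matrix (Fin 3) (Fin 3) ℝ :=
      !![-(a * b1), 0, -b1; 0, -(b * b2), -b2; d * b3, e * b3, -(c * b3)]
    ∀ μ : ℝ, 0 ≤ μ →
      ∀ z : ℂ, ((-(μ • Ku) + Gu).map (Complex.ofReal ·)).charpoly.IsRoot z →
        z.re < 0 := by
  subst hk31 hk32
  intro Ku Gu μ hμ z hz
  have hM : -(μ • Ku) + Gu =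
      !![-(μ * (k11 + k13 * b3) + a * b1), 0, -((μ * k13 + 1) * b1);
         0, -(μ * (k22 + k23 * b3) + b * b2), -((μ * k23 + 1) * b2);
         d * b3, e * b3, -(μ * k33 + c * b3)] := by
    ext i j
    fin_cases i <;> fin_cases j <;> simp [Ku, Gu] <;> ring
  rw [hM] at hz
  exact re_neg_of_isRoot_charpoly_map_ofReal (by positivity) (by positivity) (by positivity)
    (by positivity) (by positivity) hz
end
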